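/- Let R be a normal excellent local ring, π: X → Spec(R) a birational projective morphism with X regular, D an ℝ-divisor and Γ a prime divisor on X such that γ_Γ(D) > 0. Let s ∈ ℝ with 0 ≤ s ≤ γ_Γ(D). Then γ_Γ(D − sΓ) = γ_Γ(D) − s. -/

import Mathlib

universe u

/-- A regular local ring: a Noetherian local ring whose maximal ideal can be generated by
`dim A` elements. -/
def IsRegularLocalRing' (A : Type*) [CommRing A] [IsLocalRing A] : Prop :=
  IsNoetherianRing A ∧ ∃ s : Finset A,
    Ideal.span (s : Set A) = IsLocalRing.maximalIdeal A ∧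
    (s.card : WithBot (WithTop ℕ)) = ringKrullDim A

/-- A regular ring: a Noetherian ring all of whose localizations at primes are regular local
rings. -/
def IsRegularRing' (A : Type*) [CommRing A] : Prop :=
  IsNoetherianRing A ∧
    ∀ p : PrimeSpectrum A, IsRegularLocalRing' (Localization.AtPrime p.asIdeal)

/-- The `A`-algebra `B` is geometrically regular (a regular morphism): it is flat, and for
every prime `q` of `A` and every finite field extension `L` of the residue field `κ(q)`,
the ring `L ⊗_A B` is regular. -/
def Algebra.IsGeometricallyRegular (A B : Type u) [CommRing A] [CommRing B] [Algebra A B] :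
    Prop :=
  Module.Flat A B ∧
    ∀ (q : PrimeSpectrum A) (L : Type u) [Field L] [Algebra A L]
      [Algebra (IsLocalRing.ResidueField (Localization.AtPrime q.asIdeal)) L]
      [IsScalarTower A (IsLocalRing.ResidueField (Localization.AtPrime q.asIdeal)) L],
      FiniteDimensional (IsLocalRing.ResidueField (Localization.AtPrime q.asIdeal)) L →
      IsRegularRing' (TensorProduct A L B)

/-- `R` is a G-ring (Grothendieck ring): for every prime `p`, the formal fibers of `R_p` are
geometrically regular, i.e. the completion map `R_p → (R_p)^` is a regular morphism. -/
def IsGrothendieckRing (R : Type u) [CommRing R] : Prop :=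
  ∀ p : PrimeSpectrum R,
    Algebra.IsGeometricallyRegular (Localization.AtPrime p.asIdeal)
      (AdicCompletion (IsLocalRing.maximalIdeal (Localization.AtPrime p.asIdeal))
        (Localization.AtPrime p.asIdeal))

/-- `R` is J-2: every finitely generated `R`-algebra has open regular locus. -/
def IsJTwo (R : Type u) [CommRing R] : Prop :=
  ∀ (n : ℕ) (I : Ideal (MvPolynomial (Fin n) R)),
    IsOpen {p : PrimeSpectrum (MvPolynomial (Fin n) R ⧸ I) |
      IsRegularLocalRing' (Localization.AtPrime p.asIdeal)}

/-- A catenary ring: any two saturated chains of primes with the same endpoints have the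
same length. -/
def IsCatenaryRing (A : Type*) [CommRing A] : Prop :=
  ∀ c₁ c₂ : LTSeries (PrimeSpectrum A),
    c₁.head = c₂.head → c₁.last = c₂.last →
    (∀ i : Fin c₁.length, c₁.toFun i.castSucc ⋖ c₁.toFun i.succ) →
    (∀ i : Fin c₂.length, c₂.toFun i.castSucc ⋖ c₂.toFun i.succ) →
    c₁.length = c₂.length

/-- `R` is universally catenary: every finitely generated `R`-algebra is catenary. -/
def IsUniversallyCatenary (R : Type u) [CommRing R] : Prop :=
  ∀ (n : ℕ) (I : Ideal (MvPolynomial (Fin n) R)),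
    IsCatenaryRing (MvPolynomial (Fin n) R ⧸ I)

/-- An excellent ring: a Noetherian, universally catenary G-ring satisfying J-2. -/
def IsExcellentRing (R : Type u) [CommRing R] : Prop :=
  IsNoetherianRing R ∧ IsUniversallyCatenary R ∧ IsGrothendieckRing R ∧ IsJTwo R

/-- The data of a birational projective morphism `π : X → Spec R` with `X` regular
(a nonsingular model of the normal excellent local domain `R`), recorded through its divisor
theory: the type of prime divisors `E` on `X` (integral closed subschemes of codimension one)
together with the discrete valuations `ord_E = ν_E` of the function field `K = Frac R` of `X`
given by the one-dimensional regular (hence discrete valuation) local rings `O_{X,E}`. -/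
structure RegularBirationalModel (R : Type*) [CommRing R] [IsDomain R] where
  /-- The prime divisors on `X`. -/
  PrimeDivisor : Type*
  /-- `ord E f = ν_E(f)`, the order of vanishing of the rational function `f ∈ K` along the
  prime divisor `E` (the value at `f = 0` is irrelevant). -/
  ord : PrimeDivisor → FractionRing R → ℤ
  ord_mul : ∀ E (x y : FractionRing R), x ≠ 0 → y ≠ 0 →
    ord E (x * y) = ord E x + ord E y
  ord_add : ∀ E (x y : FractionRing R), x ≠ 0 → y ≠ 0 → x + y ≠ 0 →
    min (ord E x) (ord E y) ≤ ord E (x + y)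
  /-- Each `O_{X,E}` is a discrete valuation ring with value group `ℤ`. -/
  ord_surj : ∀ E (n : ℤ), ∃ x : FractionRing R, x ≠ 0 ∧ ord E x = n
  /-- Distinct prime divisors give distinct valuations. -/
  ord_injective : Function.Injective ord
  /-- A nonzero rational function has finitely many zeros and poles: `(f) = Σ_E ν_E(f) E`
  is a divisor. -/
  finite_support : ∀ x : FractionRing R, x ≠ 0 → {E | ord E x ≠ 0}.Finite
  /-- `π : X → Spec R`: every local ring `O_{X,E}` contains `R`. -/
  ord_nonneg : ∀ E (r : R), r ≠ 0 → 0 ≤ ord E (algebraMap R (FractionRing R) r)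
  /-- `π` is proper and birational and `X` is normal: `Γ(X, O_X) = R`, i.e. a rational
  function with no poles along any prime divisor of `X` belongs to `R`. -/
  globalSections : ∀ x : FractionRing R, x ≠ 0 → (∀ E, 0 ≤ ord E x) →
    ∃ r : R, algebraMap R (FractionRing R) r = x

namespace RegularBirationalModel

variable {R : Type*} [CommRing R] [IsDomain R] (M : RegularBirationalModel R)

/-- An ℝ-divisor `D = Σ aᵢ Eᵢ` on `X`, i.e. a finitely supported real-valued function on the
prime divisors of `X`. -/
def IsDivisor (D : M.PrimeDivisor → ℝ) : Prop := (Function.support D).Finite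

/-- An effective divisor: all coefficients nonnegative. -/
def IsEffective (D : M.PrimeDivisor → ℝ) : Prop := ∀ E, 0 ≤ D E

/-- Linear equivalence of ℝ-divisors: `D₁ ∼ D₂` iff `D₁ − D₂ = (f)` for some `f ∈ K`. -/
def LinEquiv (D₁ D₂ : M.PrimeDivisor → ℝ) : Prop :=
  ∃ x : FractionRing R, x ≠ 0 ∧ ∀ E, D₁ E - D₂ E = (M.ord E x : ℝ)

/-- `τ_Γ(D) = inf {ord_Γ(G) : G ≥ 0, G ∼ D}`. -/
noncomputable def tau (Γ : M.PrimeDivisor) (D : M.PrimeDivisor → ℝ) : ℝ :=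
  sInf {t : ℝ | ∃ G : M.PrimeDivisor → ℝ, M.IsEffective G ∧ M.LinEquiv G D ∧ t = G Γ}

/-- `γ_Γ(D) = inf {τ_Γ(mD)/m : m ∈ ℤ_{>0}}`. -/
noncomputable def gamma (Γ : M.PrimeDivisor) (D : M.PrimeDivisor → ℝ) : ℝ :=
  sInf {t : ℝ | ∃ m : ℕ, 0 < m ∧ t = M.tau Γ (fun E => m * D E) / m}

/-- The divisor `c Γ` supported on the single prime divisor `Γ`. -/
noncomputable def single (Γ : M.PrimeDivisor) (c : ℝ) : M.PrimeDivisor → ℝ :=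
  open scoped Classical in fun E => if E = Γ then c else 0

/-- `Γ(X, O_X(⌊D⌋)) = {f ∈ K ∣ (f) + D ≥ 0} ⊆ K` (which only depends on `⌊D⌋` since the
functions `ord_E` are integer-valued). -/
def sections (D : M.PrimeDivisor → ℝ) : Set (FractionRing R) :=
  {x | x = 0 ∨ ∀ E, 0 ≤ (M.ord E x : ℝ) + D E}

end RegularBirationalModel

/-!
Subtracting `sΓ` from `mD` lowers the order along `Γ` of every effective divisor in the linear
system of `mD` by `ms`, and keeps it effective: each such order is at least `m γ_Γ(D) ≥ ms`.
As the system is nonempty when `γ_Γ(D) > 0`, this gives `τ_Γ(m(D − sΓ)) = τ_Γ(mD) − ms` for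
every `m > 0`; dividing by `m` and taking the infimum over `m` gives the claim.
-/

theorem csInf_image_sub_const {α : Type*} [ConditionallyCompleteLattice α] [AddGroup α]
    [AddRightMono α] {s : Set α} (hne : s.Nonempty) (hbdd : BddBelow s) (c : α) :
    sInf ((· - c) '' s) = sInf s - c :=
  ((OrderIso.subRight c).map_csInf' hne hbdd).symm

namespace RegularBirationalModel

variable {R : Type*} [CommRing R] [IsDomain R] (M : RegularBirationalModel R)

def linearSystemOrds (Γ : M.PrimeDivisor) (D : M.PrimeDivisor → ℝ) : Set ℝ :=
  {t : ℝ | ∃ G : M.PrimeDivisor → ℝ, M.IsEffective G ∧ M.LinEquiv G D ∧ t = G Γ}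

variable {M}

theorem tau_eq_sInf (Γ : M.PrimeDivisor) (D : M.PrimeDivisor → ℝ) :
    M.tau Γ D = sInf (M.linearSystemOrds Γ D) := rfl

theorem nonneg_of_mem_linearSystemOrds {Γ : M.PrimeDivisor} {D : M.PrimeDivisor → ℝ} {t : ℝ}
    (ht : t ∈ M.linearSystemOrds Γ D) : 0 ≤ t := by
  obtain ⟨G, hG, -, rfl⟩ := ht
  exact hG Γ

theorem bddBelow_linearSystemOrds (Γ : M.PrimeDivisor) (D : M.PrimeDivisor → ℝ) :
    BddBelow (M.linearSystemOrds Γ D) :=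
  ⟨0, fun _ => nonneg_of_mem_linearSystemOrds⟩

theorem tau_nonneg (Γ : M.PrimeDivisor) (D : M.PrimeDivisor → ℝ) : 0 ≤ M.tau Γ D :=
  Real.sInf_nonneg fun _ => nonneg_of_mem_linearSystemOrds

@[simp]
theorem single_self (Γ : M.PrimeDivisor) (c : ℝ) : M.single Γ c Γ = c := by
  simp [single]

theorem single_of_ne {Γ E : M.PrimeDivisor} (h : E ≠ Γ) (c : ℝ) : M.single Γ c E = 0 := by
  simp [single, h]

theorem single_nonneg {Γ : M.PrimeDivisor} {c : ℝ} (hc : 0 ≤ c) (E : M.PrimeDivisor) :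
    0 ≤ M.single Γ c E := by
  by_cases h : E = Γ
  · simpa [h] using hc
  · simp [single_of_ne h]

theorem mul_single (Γ : M.PrimeDivisor) (a c : ℝ) (E : M.PrimeDivisor) :
    a * M.single Γ c E = M.single Γ (a * c) E := by
  by_cases h : E = Γ
  · simp [h]
  · simp [single_of_ne h]

theorem linEquiv_sub_sub_iff {G D F : M.PrimeDivisor → ℝ} :
    M.LinEquiv (fun E => G E - F E) (fun E => D E - F E) ↔ M.LinEquiv G D := by
  simp only [LinEquiv, sub_sub_sub_cancel_right]

theorem linearSystemOrds_sub_single {Γ : M.PrimeDivisor} {D : M.PrimeDivisor → ℝ} {c : ℝ}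
    (hc : 0 ≤ c) (hle : ∀ t ∈ M.linearSystemOrds Γ D, c ≤ t) :
    M.linearSystemOrds Γ (fun E => D E - M.single Γ c E) =
      (· - c) '' M.linearSystemOrds Γ D := by
  ext t
  constructor
  · rintro ⟨G, hG, hGD, rfl⟩
    refine ⟨G Γ + c, ⟨fun E => G E + M.single Γ c E, fun E => add_nonneg (hG E)
      (single_nonneg hc E), ?_, by simp⟩, add_sub_cancel_right _ _⟩
    rw [← linEquiv_sub_sub_iff (F := M.single Γ c)]
    simpa only [add_sub_cancel_right] using hGD
  · rintro ⟨_, ⟨G, hG, hGD, rfl⟩, rfl⟩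
    have hcG : c ≤ G Γ := hle _ ⟨G, hG, hGD, rfl⟩
    refine ⟨fun E => G E - M.single Γ c E, fun E => ?_, linEquiv_sub_sub_iff.2 hGD, by simp⟩
    by_cases h : E = Γ
    · simpa [h] using hcG
    · simpa [single_of_ne h] using hG E

theorem tau_sub_single {Γ : M.PrimeDivisor} {D : M.PrimeDivisor → ℝ} {c : ℝ} (hc : 0 ≤ c)
    (hne : (M.linearSystemOrds Γ D).Nonempty) (hle : ∀ t ∈ M.linearSystemOrds Γ D, c ≤ t) :
    M.tau Γ (fun E => D E - M.single Γ c E) = M.tau Γ D - c := by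
  rw [tau_eq_sInf, linearSystemOrds_sub_single hc hle,
    csInf_image_sub_const hne (bddBelow_linearSystemOrds Γ D), tau_eq_sInf]

theorem bddBelow_tau_div (Γ : M.PrimeDivisor) (D : M.PrimeDivisor → ℝ) :
    BddBelow {t : ℝ | ∃ m : ℕ, 0 < m ∧ t = M.tau Γ (fun E => m * D E) / m} :=
  ⟨0, by rintro _ ⟨m, -, rfl⟩; exact div_nonneg (tau_nonneg _ _) m.cast_nonneg⟩

theorem gamma_le_tau_div (Γ : M.PrimeDivisor) (D : M.PrimeDivisor → ℝ) {m : ℕ} (hm : 0 < m) :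
    M.gamma Γ D ≤ M.tau Γ (fun E => m * D E) / m :=
  csInf_le (bddBelow_tau_div Γ D) ⟨m, hm, rfl⟩

/-- If the linear system of `mD` were empty, the junk value `τ_Γ(mD) = sInf ∅ = 0` would
force `γ_Γ(D) ≤ 0`. -/
theorem linearSystemOrds_nonempty_of_gamma_pos {Γ : M.PrimeDivisor} {D : M.PrimeDivisor → ℝ}
    (hΓ : 0 < M.gamma Γ D) {m : ℕ} (hm : 0 < m) :
    (M.linearSystemOrds Γ (fun E => m * D E)).Nonempty := by
  by_contra h
  have htau : M.tau Γ (fun E => m * D E) = 0 := by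
    rw [tau_eq_sInf, Set.not_nonempty_iff_eq_empty.1 h, Real.sInf_empty]
  have := gamma_le_tau_div Γ D hm
  rw [htau, zero_div] at this
  linarith

theorem mul_gamma_le_of_mem_linearSystemOrds {Γ : M.PrimeDivisor} {D : M.PrimeDivisor → ℝ}
    {m : ℕ} (hm : 0 < m) {t : ℝ} (ht : t ∈ M.linearSystemOrds Γ (fun E => m * D E)) :
    m * M.gamma Γ D ≤ t :=
  calc m * M.gamma Γ D ≤ m * (M.tau Γ (fun E => m * D E) / m) := by
        gcongr; exact gamma_le_tau_div Γ D hm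
    _ = M.tau Γ (fun E => m * D E) := by field_simp
    _ ≤ t := csInf_le (bddBelow_linearSystemOrds _ _) ht

theorem tau_mul_sub_single_div {Γ : M.PrimeDivisor} {D : M.PrimeDivisor → ℝ}
    (hΓ : 0 < M.gamma Γ D) {s : ℝ} (hs0 : 0 ≤ s) (hs : s ≤ M.gamma Γ D) {m : ℕ} (hm : 0 < m) :
    M.tau Γ (fun E => m * (D E - M.single Γ s E)) / m = M.tau Γ (fun E => m * D E) / m - s := by
  have hm' : (0 : ℝ) < m := Nat.cast_pos.2 hm
  have hmD : (fun E => m * (D E - M.single Γ s E)) =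
      fun E => m * D E - M.single Γ (m * s) E := by
    simp only [mul_sub, mul_single]
  rw [hmD, tau_sub_single (by positivity) (linearSystemOrds_nonempty_of_gamma_pos hΓ hm)
    fun t ht => (mul_le_mul_of_nonneg_left hs hm'.le).trans
      (mul_gamma_le_of_mem_linearSystemOrds hm ht)]
  field_simp

end RegularBirationalModel

theorem gamma_sub_single_general {R : Type u} [CommRing R] [IsDomain R]
    (M : RegularBirationalModel R) (D : M.PrimeDivisor → ℝ)
    (Γ : M.PrimeDivisor) (hΓ : 0 < M.gamma Γ D)
    (s : ℝ) (hs0 : 0 ≤ s) (hs : s ≤ M.gamma Γ D) :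
    M.gamma Γ (fun E => D E - M.single Γ s E) = M.gamma Γ D - s := by
  have hset : {t : ℝ | ∃ m : ℕ, 0 < m ∧
        t = M.tau Γ (fun E => m * (D E - M.single Γ s E)) / m} =
      (· - s) '' {t : ℝ | ∃ m : ℕ, 0 < m ∧ t = M.tau Γ (fun E => m * D E) / m} := by
    ext t
    constructor
    · rintro ⟨m, hm, rfl⟩
      exact ⟨_, ⟨m, hm, rfl⟩, (RegularBirationalModel.tau_mul_sub_single_div hΓ hs0 hs hm).symm⟩
    · rintro ⟨_, ⟨m, hm, rfl⟩, rfl⟩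
      exact ⟨m, hm, (RegularBirationalModel.tau_mul_sub_single_div hΓ hs0 hs hm).symm⟩
  rw [RegularBirationalModel.gamma, RegularBirationalModel.gamma, hset]
  refine csInf_image_sub_const ?_ (RegularBirationalModel.bddBelow_tau_div Γ D) s
  exact ⟨_, 1, one_pos, rfl⟩

/-- Lemma A. Let `R` be a normal excellent local ring,
`π : X → Spec R` a birational projective morphism with `X` regular, `D` an ℝ-divisor and
`Γ` a prime divisor on `X` with `γ_Γ(D) > 0`.  If `0 ≤ s ≤ γ_Γ(D)`, then
`γ_Γ(D − sΓ) = γ_Γ(D) − s`. -/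
theorem gamma_sub_single {R : Type u} [CommRing R] [IsDomain R] [IsIntegrallyClosed R]
    [IsLocalRing R] (hexc : IsExcellentRing R)
    (M : RegularBirationalModel R) (D : M.PrimeDivisor → ℝ) (hD : M.IsDivisor D)
    (Γ : M.PrimeDivisor) (hΓ : 0 < M.gamma Γ D)
    (s : ℝ) (hs0 : 0 ≤ s) (hs : s ≤ M.gamma Γ D) :
    M.gamma Γ (fun E => D E - M.single Γ s E) = M.gamma Γ D - s :=
  gamma_sub_single_general M D Γ hΓ s hs0 hs
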